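/- Let G_{1/2}(x) = (2π)^{−3/2} e^{−|x|²/2} be the Gaussian heat kernel at time 1/2 on ℝ³, and let f(x) = 1/|x|. Then the convolution F̄ = G_{1/2} ∗ f satisfies the decay estimate |F̄(x)| ≤ C(1+|x|)^{−1} for all x ∈ ℝ³, for some constant C > 0 independent of x. -/

import Mathlib

open MeasureTheory

/-- ℝ³ as a Euclidean space. -/
abbrev E3 := EuclideanSpace ℝ (Fin 3)

/-- The Gaussian heat kernel at time 1/2 on ℝ³. -/
noncomputable def Ghalf (x : E3) : ℝ :=
  (2 * Real.pi) ^ (-(3 : ℝ) / 2) * Real.exp (-‖x‖ ^ 2 / 2)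

/-- The mollified Newtonian potential `F̄ = G_{1/2} ∗ (1/|·|)`. -/
noncomputable def Fbar (x : E3) : ℝ := ∫ y : E3, Ghalf (x - y) * ‖y‖⁻¹


/-!
Since `‖x‖ ≤ ‖x - y‖ + ‖y‖`, we have `(1 + ‖x‖) ‖y‖⁻¹ ≤ (1 + ‖x - y‖) ‖y‖⁻¹ + 1`, so
`(1 + ‖x‖) F̄(x)` is at most the convolution of the weighted kernel `(1 + ‖·‖) G_{1/2}` with
`‖·‖⁻¹`, plus `∫ G_{1/2}`. Both kernels are bounded and integrable, and the convolution of such a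
kernel with `‖·‖⁻¹` is bounded uniformly in `x`: split `‖y‖⁻¹` into its singular part on the unit
ball, which is integrable in dimension at least two, and a remainder bounded by `1`.
-/

open Real Set Metric

lemma mul_inv_norm_le_indicator_add {E : Type*} [SeminormedAddCommGroup E] {a B : ℝ}
    (ha : 0 ≤ a) (haB : a ≤ B) (y : E) :
    a * ‖y‖⁻¹ ≤ B * (ball 0 1).indicator (fun y : E => ‖y‖⁻¹) y + a := by
  by_cases hy : y ∈ ball (0 : E) 1
  · rw [indicator_of_mem hy]
    nlinarith [inv_nonneg.2 (norm_nonneg y)]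
  · rw [indicator_of_notMem hy, mul_zero, zero_add]
    rw [mem_ball_zero_iff, not_lt] at hy
    exact mul_le_of_le_one_right ha (inv_le_one_of_one_le₀ hy)

lemma one_add_norm_mul_inv_norm_le {E : Type*} [SeminormedAddCommGroup E] (x y : E) :
    (1 + ‖x‖) * ‖y‖⁻¹ ≤ (1 + ‖x - y‖) * ‖y‖⁻¹ + 1 := by
  rcases (norm_nonneg y).eq_or_lt with hy | hy
  · simp [← hy]
  calc (1 + ‖x‖) * ‖y‖⁻¹ ≤ (1 + ‖x - y‖ + ‖y‖) * ‖y‖⁻¹ := by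
        have := norm_le_norm_sub_add x y
        exact mul_le_mul_of_nonneg_right (by linarith) (by positivity)
    _ = (1 + ‖x - y‖) * ‖y‖⁻¹ + 1 := by field_simp

section InverseNorm

variable {E : Type*} [NormedAddCommGroup E] [NormedSpace ℝ E] [FiniteDimensional ℝ E]
  [MeasurableSpace E] [BorelSpace E] {μ : Measure E} [μ.IsAddHaarMeasure]

lemma integrableOn_ball_inv_norm (hE : 1 < Module.finrank ℝ E) (r : ℝ) :
    IntegrableOn (fun y : E => ‖y‖⁻¹) (ball 0 r) μ :=
  integrableOn_ball_of_norm_le_rpow hE.le (C := 1) (α := 1) (by exact_mod_cast hE)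
    (.of_forall fun y => by simp [Real.rpow_neg_one])
    (measurable_norm.inv).aestronglyMeasurable

lemma integrable_comp_sub_mul_inv_norm (hE : 1 < Module.finrank ℝ E) {h : E → ℝ} {B : ℝ}
    (hh : Integrable h μ) (h0 : ∀ z, 0 ≤ h z) (hB : ∀ z, h z ≤ B) (x : E) :
    Integrable (fun y => h (x - y) * ‖y‖⁻¹) μ := by
  have hdom : Integrable
      (fun y => B * (ball 0 1).indicator (fun y : E => ‖y‖⁻¹) y + h (x - y)) μ :=
    (((integrableOn_ball_inv_norm hE 1).integrable_indicator measurableSet_ball).const_mul B).add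
      (hh.comp_sub_left x)
  refine hdom.mono' ((hh.comp_sub_left x).aestronglyMeasurable.mul
    (measurable_norm.inv).aestronglyMeasurable) (.of_forall fun y => ?_)
  rw [Real.norm_of_nonneg (mul_nonneg (h0 _) (inv_nonneg.2 (norm_nonneg y)))]
  exact mul_inv_norm_le_indicator_add (h0 _) (hB _) y

lemma integral_comp_sub_mul_inv_norm_le (hE : 1 < Module.finrank ℝ E) {h : E → ℝ} {B : ℝ}
    (hh : Integrable h μ) (h0 : ∀ z, 0 ≤ h z) (hB : ∀ z, h z ≤ B) (x : E) :
    ∫ y, h (x - y) * ‖y‖⁻¹ ∂μ ≤ B * ∫ y in ball 0 1, ‖y‖⁻¹ ∂μ + ∫ z, h z ∂μ := by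
  have hsing : Integrable ((ball 0 1).indicator fun y : E => ‖y‖⁻¹) μ :=
    (integrableOn_ball_inv_norm hE 1).integrable_indicator measurableSet_ball
  calc ∫ y, h (x - y) * ‖y‖⁻¹ ∂μ
      ≤ ∫ y, B * (ball 0 1).indicator (fun y : E => ‖y‖⁻¹) y + h (x - y) ∂μ :=
        integral_mono (integrable_comp_sub_mul_inv_norm hE hh h0 hB x)
          ((hsing.const_mul B).add (hh.comp_sub_left x))
          fun y => mul_inv_norm_le_indicator_add (h0 _) (hB _) y
    _ = B * ∫ y in ball 0 1, ‖y‖⁻¹ ∂μ + ∫ z, h z ∂μ := by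
        rw [integral_add (hsing.const_mul B) (hh.comp_sub_left x), integral_const_mul,
          integral_indicator measurableSet_ball, integral_sub_left_eq_self h μ x]

lemma one_add_norm_mul_integral_le (hE : 1 < Module.finrank ℝ E) {h : E → ℝ} {B : ℝ}
    (hh : Integrable h μ) (hw : Integrable (fun z => (1 + ‖z‖) * h z) μ) (h0 : ∀ z, 0 ≤ h z)
    (hB : ∀ z, (1 + ‖z‖) * h z ≤ B) (x : E) :
    (1 + ‖x‖) * ∫ y, h (x - y) * ‖y‖⁻¹ ∂μ ≤
      B * ∫ y in ball 0 1, ‖y‖⁻¹ ∂μ + ∫ z, (1 + ‖z‖) * h z ∂μ + ∫ z, h z ∂μ := by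
  have hhB : ∀ z, h z ≤ B := fun z =>
    (le_mul_of_one_le_left (h0 z) (by linarith [norm_nonneg z])).trans (hB z)
  have hw0 : ∀ z, 0 ≤ (1 + ‖z‖) * h z := fun z => mul_nonneg (by positivity) (h0 z)
  have hint := integrable_comp_sub_mul_inv_norm hE hh h0 hhB x
  have hwint := integrable_comp_sub_mul_inv_norm hE hw hw0 hB x
  have hwle := integral_comp_sub_mul_inv_norm_le hE hw hw0 hB x
  have hshift : Integrable (fun y => h (x - y)) μ := hh.comp_sub_left x
  calc (1 + ‖x‖) * ∫ y, h (x - y) * ‖y‖⁻¹ ∂μ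
      = ∫ y, h (x - y) * ((1 + ‖x‖) * ‖y‖⁻¹) ∂μ := by
        rw [← integral_const_mul]; congr 1 with y; ring
    _ ≤ ∫ y, (1 + ‖x - y‖) * h (x - y) * ‖y‖⁻¹ + h (x - y) ∂μ := by
        refine integral_mono (hint.const_mul (1 + ‖x‖) |>.congr (.of_forall fun y => by ring))
          (hwint.add hshift) fun y => ?_
        calc h (x - y) * ((1 + ‖x‖) * ‖y‖⁻¹)
            ≤ h (x - y) * ((1 + ‖x - y‖) * ‖y‖⁻¹ + 1) :=
              mul_le_mul_of_nonneg_left (one_add_norm_mul_inv_norm_le x y) (h0 _)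
          _ = (1 + ‖x - y‖) * h (x - y) * ‖y‖⁻¹ + h (x - y) := by ring
    _ ≤ B * ∫ y in ball 0 1, ‖y‖⁻¹ ∂μ + ∫ z, (1 + ‖z‖) * h z ∂μ + ∫ z, h z ∂μ := by
        rw [integral_add hwint hshift, integral_sub_left_eq_self h μ x]
        linarith

end InverseNorm

lemma one_add_mul_exp_neg_sq_le (t : ℝ) : (1 + t) * exp (-t ^ 2 / 2) ≤ 2 * exp (-t ^ 2 / 4) := by
  have hquarter : (1 + t) * exp (-t ^ 2 / 4) ≤ 2 := by
    rw [show -t ^ 2 / 4 = -(t ^ 2 / 4) by ring, exp_neg, ← div_eq_mul_inv,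
      div_le_iff₀ (exp_pos _)]
    nlinarith [add_one_le_exp (t ^ 2 / 4), sq_nonneg (t - 1)]
  calc (1 + t) * exp (-t ^ 2 / 2) = (1 + t) * exp (-t ^ 2 / 4) * exp (-t ^ 2 / 4) := by
        rw [mul_assoc, ← exp_add]; ring_nf
    _ ≤ 2 * exp (-t ^ 2 / 4) := by gcongr

lemma integrable_exp_neg_sq_norm_div {V : Type*} [NormedAddCommGroup V] [InnerProductSpace ℝ V]
    [FiniteDimensional ℝ V] [MeasurableSpace V] [BorelSpace V] {a : ℝ} (ha : 0 < a) :
    Integrable (fun v : V => exp (-‖v‖ ^ 2 / a)) := by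
  have hint := GaussianFourier.integral_rexp_neg_mul_sq_norm (V := V) (inv_pos.2 ha)
  -- a non-integrable function has integral `0`, while the Gaussian integral is positive
  refine Integrable.of_integral_ne_zero ?_
  simp_rw [div_eq_mul_inv, neg_mul, mul_comm _ a⁻¹, ← neg_mul]
  rw [hint]
  positivity

lemma Ghalf_nonneg (z : E3) : 0 ≤ Ghalf z := by
  unfold Ghalf; positivity

lemma one_add_norm_mul_Ghalf_le (z : E3) :
    (1 + ‖z‖) * Ghalf z ≤ 2 * (2 * π) ^ (-(3 : ℝ) / 2) * exp (-‖z‖ ^ 2 / 4) := by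
  have hc : 0 ≤ (2 * π) ^ (-(3 : ℝ) / 2) := by positivity
  unfold Ghalf
  nlinarith [one_add_mul_exp_neg_sq_le ‖z‖]

lemma integrable_Ghalf : Integrable Ghalf :=
  (integrable_exp_neg_sq_norm_div two_pos).const_mul _

lemma integrable_one_add_norm_mul_Ghalf : Integrable (fun z : E3 => (1 + ‖z‖) * Ghalf z) := by
  refine ((integrable_exp_neg_sq_norm_div four_pos).const_mul (2 * (2 * π) ^ (-(3 : ℝ) / 2))).mono'
    ((by unfold Ghalf; fun_prop : Continuous fun z : E3 => (1 + ‖z‖) * Ghalf z).aestronglyMeasurable)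
    (.of_forall fun z => ?_)
  rw [Real.norm_of_nonneg (mul_nonneg (by positivity) (Ghalf_nonneg z))]
  exact one_add_norm_mul_Ghalf_le z

lemma Fbar_nonneg (x : E3) : 0 ≤ Fbar x :=
  integral_nonneg fun y => mul_nonneg (Ghalf_nonneg _) (inv_nonneg.2 (norm_nonneg y))

/-- Decay estimate: `|F̄(x)| ≤ C (1+|x|)⁻¹` for all `x ∈ ℝ³`. -/
theorem Fbar_decay : ∃ C : ℝ, 0 < C ∧ ∀ x : E3, |Fbar x| ≤ C * (1 + ‖x‖)⁻¹ := by
  have hGhalf_le (z : E3) : (1 + ‖z‖) * Ghalf z ≤ 2 * (2 * π) ^ (-(3 : ℝ) / 2) :=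
    (one_add_norm_mul_Ghalf_le z).trans
      (mul_le_of_le_one_right (by positivity) (exp_le_one_iff.2 (by nlinarith)))
  obtain ⟨K, hK⟩ : ∃ K, ∀ x : E3, (1 + ‖x‖) * Fbar x ≤ K :=
    ⟨_, one_add_norm_mul_integral_le (by simp) integrable_Ghalf
      integrable_one_add_norm_mul_Ghalf Ghalf_nonneg hGhalf_le⟩
  have hK0 : 0 ≤ K := (mul_nonneg (by positivity) (Fbar_nonneg 0)).trans (hK 0)
  refine ⟨K + 1, by linarith, fun x => ?_⟩
  rw [abs_of_nonneg (Fbar_nonneg x), ← div_eq_mul_inv, le_div_iff₀ (by positivity)]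
  linarith [hK x]
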